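/- For positive integers a, b, c with a ≤ b, the quantity 2^{-a} · ∏_{i=1}^{a} (2c+b-a+i)/(c+b-a+i) · ∏_{i=1}^{a} [ ∏_{j=1}^{b-a+1} (c+i+j-1)/(i+j-1) · ∏_{j=b-a+2}^{b-a+i} (2c+i+j-1)/(i+j-1) ] is positive, and when multiplied by 2^a it is a positive rational number whose denominator divides ∏_{i=1}^{a}(c+b-a+i). -/

import Mathlib

/-
With `m = b - a`, the factor `2 ^ a` cancels and `2 ^ a * ciucuProduct a b c` is
`∏ (2c + m + i) / (c + m + i)` times `proctorProduct a b c`, so everything reduces to the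
integrality of Proctor's product. Written over `x = i - 1`, each factor of that product is the
factorial quotient `x! (c+n+x)! (2c+n+2x)! / ((n+2x)! (c+x)! (2c+n+x)!)` with `n = m + 1`.
By Legendre's formula, the product of the denominators divides the product of the numerators
once, for every `q ≥ 1`, the corresponding sums of `⌊· / q⌋` over `x < a` compare. The summand
difference is unchanged when `x`, `c` or `n` moves by `q`, so one may assume `a ≤ q` and
`c, n < q`; then each floor sum is a sum of at most four threshold counts `a - t`, and the
inequality follows by pairing thresholds, using that `t ↦ a - t` is convex and decreasing.
-/

open Finset

/-- Proctor's product formula for the number of lozenge tilings of a halved hexagon. -/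
def proctorProduct (a b c : ℕ) : ℚ :=
  ∏ i ∈ Finset.Icc 1 a,
    ((∏ j ∈ Finset.Icc 1 (b - a + 1), ((c : ℚ) + i + j - 1) / ((i : ℚ) + j - 1)) *
      ∏ j ∈ Finset.Icc (b - a + 2) (b - a + i), (2 * (c : ℚ) + i + j - 1) / ((i : ℚ) + j - 1))

/-- Ciucu's weighted version of Proctor's formula. -/
def ciucuProduct (a b c : ℕ) : ℚ :=
  (2 : ℚ) ^ (-(a : ℤ)) *
    (∏ i ∈ Finset.Icc 1 a, (2 * (c : ℚ) + b - a + i) / ((c : ℚ) + b - a + i)) *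
    proctorProduct a b c

open scoped Nat

theorem Nat.prod_factorial_dvd_prod_factorial {ι κ : Type*} (s : Finset ι) (t : Finset κ)
    (f : ι → ℕ) (g : κ → ℕ) (h : ∀ q, 0 < q → ∑ i ∈ s, f i / q ≤ ∑ j ∈ t, g j / q) :
    ∏ i ∈ s, (f i)! ∣ ∏ j ∈ t, (g j)! := by
  rw [← Nat.factorization_le_iff_dvd (prod_ne_zero_iff.2 fun _ _ => Nat.factorial_ne_zero _)
    (prod_ne_zero_iff.2 fun _ _ => Nat.factorial_ne_zero _)]
  intro p
  by_cases hp : p.Prime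
  · set B := ∑ i ∈ s, f i + ∑ j ∈ t, g j + 1
    have legendre (n : ℕ) (hn : n < B) : (n)!.factorization p = ∑ k ∈ Ico 1 B, n / p ^ k :=
      Nat.factorization_factorial hp ((Nat.log_le_self p n).trans_lt hn)
    have hf (i) (hi : i ∈ s) : f i < B := by
      have := single_le_sum (f := f) (fun _ _ => Nat.zero_le _) hi; omega
    have hg (j) (hj : j ∈ t) : g j < B := by
      have := single_le_sum (f := g) (fun _ _ => Nat.zero_le _) hj; omega
    simp only [Nat.factorization_prod (fun _ _ => Nat.factorial_ne_zero _),
      Finsupp.coe_finsetSum, Finset.sum_apply]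
    rw [sum_congr rfl fun i hi => legendre (f i) (hf i hi),
      sum_congr rfl fun j hj => legendre (g j) (hg j hj), sum_comm, sum_comm (s := t)]
    exact sum_le_sum fun k _ => h _ (pow_pos hp.pos k)
  · simp [Nat.factorization_eq_zero_of_not_prime _ hp]

theorem Rat.den_natCast_div_natCast_dvd (m n : ℕ) : ((m : ℚ) / n).den ∣ n := by
  have := Rat.den_dvd m n
  rw [Rat.divInt_eq_div, Int.cast_natCast, Int.cast_natCast] at this
  exact Int.natCast_dvd_natCast.mp this

lemma prod_Ioc_natCast_add {K : Type*} [Field K] [CharZero K] (s : ℕ) {l k : ℕ} (h : l ≤ k) :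
    ∏ j ∈ Ioc l k, ((s : K) + j) = (s + k)! / (s + l)! := by
  induction k, h using Nat.le_induction with
  | base => simp [Nat.factorial_ne_zero]
  | succ k hlk ih =>
    rw [prod_Ioc_succ_top hlk, ih, ← add_assoc, Nat.factorial_succ]
    push_cast
    field_simp
    ring

lemma prod_Icc_one_eq_prod_range {M : Type*} [CommMonoid M] (f : ℕ → M) (a : ℕ) :
    ∏ i ∈ Icc 1 a, f i = ∏ x ∈ range a, f (x + 1) := by
  rw [range_eq_Ico, prod_Ico_add', zero_add, Ico_add_one_right_eq_Icc]

-- `a - (j * q - β)` counts the `x < a` with `j * q ≤ β + x`.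
lemma sum_range_add_div {q : ℕ} (hq : 0 < q) (β a : ℕ) (h : β + a ≤ 5 * q) :
    ∑ x ∈ range a, (β + x) / q =
      (a - (q - β)) + (a - (2 * q - β)) + (a - (3 * q - β)) + (a - (4 * q - β)) := by
  induction a with
  | zero => simp
  | succ a ih =>
    rw [sum_range_succ, ih (by omega)]
    have hlo := Nat.div_mul_le_self (β + a) q
    have hhi := Nat.lt_div_mul_add (a := β + a) hq
    have hk : (β + a) / q < 5 := Nat.div_lt_of_lt_mul (by omega)
    generalize (β + a) / q = k at *
    interval_cases k <;> omega

lemma sum_range_add_two_mul_div {q : ℕ} (hq : 0 < q) (β a : ℕ) (h : β + 2 * a ≤ 5 * q + 1) :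
    ∑ x ∈ range a, (β + 2 * x) / q =
      (a - (q - β + 1) / 2) + (a - (2 * q - β + 1) / 2) + (a - (3 * q - β + 1) / 2) +
        (a - (4 * q - β + 1) / 2) := by
  induction a with
  | zero => simp
  | succ a ih =>
    rw [sum_range_succ, ih (by omega)]
    have hlo := Nat.div_mul_le_self (β + 2 * a) q
    have hhi := Nat.lt_div_mul_add (a := β + 2 * a) hq
    have hk : (β + 2 * a) / q < 5 := Nat.div_lt_of_lt_mul (by omega)
    generalize (β + 2 * a) / q = k at *
    interval_cases k <;> omega

def proctorNum (n c x : ℕ) : ℕ := x ! * (c + n + x)! * (2 * c + n + 2 * x)!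

def proctorDen (n c x : ℕ) : ℕ := (n + 2 * x)! * (c + x)! * (2 * c + n + x)!

/-- For `q = p ^ k`, summing over `k ≥ 1` and over the factors of `proctorNum` and `proctorDen`
gives the `p`-adic valuation of their quotient (Legendre's formula). -/
def floorDefect (q c n x : ℤ) : ℤ :=
  x / q + (c + n + x) / q + (2 * c + n + 2 * x) / q -
    ((n + 2 * x) / q + (c + x) / q + (2 * c + n + x) / q)

lemma floorDefect_add_mul {q : ℤ} (hq : q ≠ 0) (c n x i j k : ℤ) :
    floorDefect q (c + q * i) (n + q * j) (x + q * k) = floorDefect q c n x := by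
  have shift (y t : ℤ) : (y + q * t) / q = y / q + t := Int.add_mul_ediv_left y t hq
  unfold floorDefect
  rw [shift, show c + q * i + (n + q * j) + (x + q * k) = c + n + x + q * (i + j + k) by ring,
    show 2 * (c + q * i) + (n + q * j) + 2 * (x + q * k) =
      2 * c + n + 2 * x + q * (2 * i + j + 2 * k) by ring,
    show n + q * j + 2 * (x + q * k) = n + 2 * x + q * (j + 2 * k) by ring,
    show c + q * i + (x + q * k) = c + x + q * (i + k) by ring,
    show 2 * (c + q * i) + (n + q * j) + (x + q * k) = 2 * c + n + x + q * (2 * i + j + k) by ring,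
    shift, shift, shift, shift, shift]
  ring

lemma floorDefect_emod {q : ℤ} (hq : q ≠ 0) (c n x : ℤ) :
    floorDefect q (c % q) (n % q) x = floorDefect q c n x := by
  conv_rhs =>
    rw [← Int.emod_add_mul_ediv c q, ← Int.emod_add_mul_ediv n q, ← add_zero x, ← mul_zero q]
  exact (floorDefect_add_mul hq _ _ _ _ _ _).symm

lemma sum_floorDefect_eq (q a c n : ℕ) :
    ∑ x ∈ range a, floorDefect q c n x =
      ((∑ x ∈ range a, (x / q + (c + n + x) / q + (2 * c + n + 2 * x) / q) : ℕ) : ℤ) -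
        ((∑ x ∈ range a, ((n + 2 * x) / q + (c + x) / q + (2 * c + n + x) / q) : ℕ) : ℤ) := by
  push_cast
  rw [← sum_sub_distrib]
  rfl

lemma sum_floorDefect_nonneg_of_le {q a c n : ℕ} (ha : a ≤ q) (hc : c < q) (hn : n < q) :
    0 ≤ ∑ x ∈ range a, floorDefect q c n x := by
  have hq : 0 < q := by omega
  rw [sum_floorDefect_eq, sub_nonneg, Nat.cast_le]
  simp only [sum_add_distrib]
  rw [sum_range_add_two_mul_div hq n a (by omega), sum_range_add_div hq c a (by omega),
    sum_range_add_div hq (2 * c + n) a (by omega), sum_range_add_div hq (c + n) a (by omega),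
    sum_range_add_two_mul_div hq (2 * c + n) a (by omega),
    show ∑ x ∈ range a, x / q = 0 from
      sum_eq_zero fun x hx => Nat.div_eq_of_lt (by simp at hx; omega)]
  simp (disch := omega) only [Nat.sub_eq_zero_of_le, add_zero, zero_add]
  -- `t ↦ a - t` is convex and decreasing, so a pair of thresholds is dominated by a pair with
  -- smaller minimum and smaller sum; the right pairing depends on where `u` and `c + n` lie.
  set u := 2 * c + n
  rcases (by omega : (u < q ∧ c + n < q) ∨ (q ≤ u ∧ u < 2 * q ∧ c + n < q) ∨
      (q ≤ u ∧ u < 2 * q ∧ q ≤ c + n) ∨ (2 * q ≤ u ∧ q ≤ c + n)) with h | h | h | h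
  · have pair₁ : (a - (q - n + 1) / 2) + (a - (q - u)) ≤
        (a - (q - (c + n))) + (a - (q - u + 1) / 2) := by omega
    have pair₂ : (a - (2 * q - n + 1) / 2) + (a - (q - c)) ≤
        (a - (2 * q - (c + n))) + (a - (2 * q - u + 1) / 2) := by omega
    have pair₃ : (a - (2 * q - u)) + (a - (3 * q - u)) ≤
        (a - (3 * q - u + 1) / 2) + (a - (4 * q - u + 1) / 2) := by omega
    omega
  · have pair₁ : (a - (q - n + 1) / 2) + (a - (2 * q - u)) ≤
        (a - (q - (c + n))) + (a - (3 * q - u + 1) / 2) := by omega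
    have pair₂ : (a - (2 * q - n + 1) / 2) + (a - (q - c)) ≤
        (a - (2 * q - (c + n))) + (a - (2 * q - u + 1) / 2) := by omega
    have pair₃ : (a - (q - u)) + (a - (3 * q - u)) ≤
        (a - (q - u + 1) / 2) + (a - (4 * q - u + 1) / 2) := by omega
    omega
  · have pair₁ : (a - (q - n + 1) / 2) + (a - (q - c)) ≤
        (a - (q - (c + n))) + (a - (3 * q - u + 1) / 2) := by omega
    have pair₂ : (a - (2 * q - n + 1) / 2) + (a - (2 * q - u)) ≤
        (a - (2 * q - (c + n))) + (a - (2 * q - u + 1) / 2) := by omega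
    have pair₃ : (a - (q - u)) + (a - (3 * q - u)) ≤
        (a - (q - u + 1) / 2) + (a - (4 * q - u + 1) / 2) := by omega
    omega
  · have pair₁ : (a - (q - n + 1) / 2) + (a - (q - c)) ≤
        (a - (q - (c + n))) + (a - (3 * q - u + 1) / 2) := by omega
    have pair₂ : (a - (2 * q - n + 1) / 2) + (a - (3 * q - u)) ≤
        (a - (2 * q - (c + n))) + (a - (4 * q - u + 1) / 2) := by omega
    have pair₃ : (a - (q - u)) + (a - (2 * q - u)) ≤
        (a - (q - u + 1) / 2) + (a - (2 * q - u + 1) / 2) := by omega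
    omega

lemma sum_floorDefect_nonneg {q : ℕ} (hq : 0 < q) (c n : ℤ) (a : ℕ) :
    0 ≤ ∑ x ∈ range a, floorDefect q c n x := by
  induction a using Nat.strong_induction_on with
  | _ a ih =>
    have hq' : (q : ℤ) ≠ 0 := by positivity
    rcases le_or_gt a q with ha | ha
    · obtain ⟨c', hc'⟩ := Int.eq_ofNat_of_zero_le (Int.emod_nonneg c hq')
      obtain ⟨n', hn'⟩ := Int.eq_ofNat_of_zero_le (Int.emod_nonneg n hq')
      have hc := Int.emod_lt_of_pos c (by positivity : (0 : ℤ) < q)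
      have hn := Int.emod_lt_of_pos n (by positivity : (0 : ℤ) < q)
      simp only [← floorDefect_emod hq' c n, hc', hn']
      exact sum_floorDefect_nonneg_of_le ha (by omega) (by omega)
    · obtain ⟨r, rfl⟩ := Nat.exists_eq_add_of_le ha.le
      rw [sum_range_add]
      have period (x : ℕ) : floorDefect q c n ((q + x : ℕ) : ℤ) = floorDefect q c n x := by
        simpa [add_comm] using floorDefect_add_mul hq' c n x 0 0 1
      rw [sum_congr rfl fun x _ => period x]
      exact add_nonneg (ih q (by omega)) (ih r (by omega))

lemma sum_div_le_sum_div {q : ℕ} (hq : 0 < q) (a c n : ℕ) :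
    ∑ x ∈ range a, ((n + 2 * x) / q + (c + x) / q + (2 * c + n + x) / q) ≤
      ∑ x ∈ range a, (x / q + (c + n + x) / q + (2 * c + n + 2 * x) / q) := by
  have := sum_floorDefect_nonneg hq c n a
  rwa [sum_floorDefect_eq, sub_nonneg, Nat.cast_le] at this

lemma prod_proctorDen_dvd (a c n : ℕ) :
    ∏ x ∈ range a, proctorDen n c x ∣ ∏ x ∈ range a, proctorNum n c x := by
  have := Nat.prod_factorial_dvd_prod_factorial (range a ×ˢ (univ : Finset (Fin 3)))
    (range a ×ˢ univ) (fun p => ![n + 2 * p.1, c + p.1, 2 * c + n + p.1] p.2)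
    (fun p => ![p.1, c + n + p.1, 2 * c + n + 2 * p.1] p.2)
    (fun q hq => by simpa [sum_product, Fin.sum_univ_three] using sum_div_le_sum_div hq a c n)
  simpa [prod_product, Fin.prod_univ_three, proctorNum, proctorDen] using this

lemma proctorProduct_eq_prod_div (a b c : ℕ) :
    proctorProduct a b c =
      ∏ x ∈ range a, (proctorNum (b - a + 1) c x : ℚ) / proctorDen (b - a + 1) c x := by
  rw [proctorProduct, prod_Icc_one_eq_prod_range]
  refine prod_congr rfl fun x _ => ?_
  set m := b - a
  rw [show Icc 1 (m + 1) = Ioc 0 (m + 1) from Icc_add_one_left_eq_Ioc 0 _,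
    show Icc (m + 2) (m + (x + 1)) = Ioc (m + 1) (m + (x + 1)) from Icc_add_one_left_eq_Ioc _ _]
  simp only [prod_div_distrib]
  have hden (j : ℕ) : ((x + 1 : ℕ) : ℚ) + j - 1 = (x : ℚ) + j := by push_cast; ring
  rw [prod_congr rfl fun (j : ℕ) _ =>
      show (c : ℚ) + ((x + 1 : ℕ) : ℚ) + j - 1 = ((c + x : ℕ) : ℚ) + j by push_cast; ring,
    prod_congr rfl fun (j : ℕ) _ =>
      show 2 * (c : ℚ) + ((x + 1 : ℕ) : ℚ) + j - 1 = ((2 * c + x : ℕ) : ℚ) + j by push_cast; ring,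
    prod_congr rfl fun j _ => hden j, prod_congr rfl fun j _ => hden j]
  have hm : m + 1 ≤ m + (x + 1) := by omega
  rw [prod_Ioc_natCast_add (c + x) (Nat.zero_le _), prod_Ioc_natCast_add x (Nat.zero_le _),
    prod_Ioc_natCast_add (2 * c + x) hm, prod_Ioc_natCast_add x hm]
  simp only [proctorNum, proctorDen, Nat.cast_mul, add_zero]
  rw [show c + x + (m + 1) = c + (m + 1) + x by ring,
    show 2 * c + x + (m + (x + 1)) = 2 * c + (m + 1) + 2 * x by ring,
    show 2 * c + x + (m + 1) = 2 * c + (m + 1) + x by ring,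
    show x + (m + (x + 1)) = m + 1 + 2 * x by ring]
  field_simp

lemma proctorProduct_eq_natCast (a b c : ℕ) : ∃ N : ℕ, 0 < N ∧ proctorProduct a b c = N := by
  obtain ⟨N, hN⟩ := prod_proctorDen_dvd a c (b - a + 1)
  have hD : 0 < ∏ x ∈ range a, proctorDen (b - a + 1) c x :=
    prod_pos fun x _ => by unfold proctorDen; positivity
  have hNum : 0 < ∏ x ∈ range a, proctorNum (b - a + 1) c x :=
    prod_pos fun x _ => by unfold proctorNum; positivity
  refine ⟨N, Nat.pos_of_mul_pos_left (hN ▸ hNum), ?_⟩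
  rw [proctorProduct_eq_prod_div, prod_div_distrib, ← Nat.cast_prod, ← Nat.cast_prod, hN,
    Nat.cast_mul, mul_div_cancel_left₀ _ (Nat.cast_ne_zero.2 hD.ne')]

theorem ciucuProduct_positive_dyadic_general (a b c : ℕ) (hab : a ≤ b) :
    0 < ciucuProduct a b c ∧
      (0 < 2 ^ a * ciucuProduct a b c ∧
        ((2 ^ a * ciucuProduct a b c : ℚ)).den ∣ ∏ i ∈ Finset.Icc 1 a, (c + b - a + i)) := by
  obtain ⟨N, hN, hP⟩ := proctorProduct_eq_natCast a b c
  have hU : 0 < ∏ i ∈ Icc 1 a, (2 * c + b - a + i) := prod_pos fun i hi => by simp at hi; omega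
  have hV : 0 < ∏ i ∈ Icc 1 a, (c + b - a + i) := prod_pos fun i hi => by simp at hi; omega
  have key : 2 ^ a * ciucuProduct a b c =
      (((∏ i ∈ Icc 1 a, (2 * c + b - a + i)) * N : ℕ) : ℚ) /
        (∏ i ∈ Icc 1 a, (c + b - a + i) : ℕ) := by
    rw [ciucuProduct, hP, zpow_neg, zpow_natCast, prod_div_distrib]
    push_cast [Nat.cast_sub (by omega : a ≤ c + b), Nat.cast_sub (by omega : a ≤ 2 * c + b)]
    field_simp
  have hpos : 0 < 2 ^ a * ciucuProduct a b c := by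
    rw [key]
    exact div_pos (by exact_mod_cast Nat.mul_pos hU hN) (by exact_mod_cast hV)
  exact ⟨pos_of_mul_pos_right hpos (by positivity), hpos,
    key ▸ Rat.den_natCast_div_natCast_dvd _ _⟩

theorem ciucuProduct_positive_dyadic (a b c : ℕ)
    (ha : 0 < a) (hb : 0 < b) (hc : 0 < c) (hab : a ≤ b) :
    0 < ciucuProduct a b c ∧
      (0 < 2 ^ a * ciucuProduct a b c ∧
        ((2 ^ a * ciucuProduct a b c : ℚ)).den ∣ ∏ i ∈ Finset.Icc 1 a, (c + b - a + i)) :=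
  ciucuProduct_positive_dyadic_general a b c hab
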